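/- arXiv:1107.3250 — 3 statements merged into one kernel-verified Lean document; each statement's English description precedes it below -/
import Mathlib

section
/- Let L : ℝ → ℝ be C² with L'' ≥ γ > 0, let H = L* be its Legendre transform, and define H⁻(p) = sup_{q ≤ 0}(pq − L(q)). Then H is C¹, convex, coercive, and H is non-increasing on (−∞, L'(0)] and non-decreasing on [L'(0), +∞); moreover H⁻(p) = H(min(p, L'(0))). (That is, assumption (A1) implies assumption (A1') with p₀ = L'(0).) -/
/-!
The derivative `L'` is a strictly increasing bijection of `ℝ` (its slope is at least `γ`), so the
supremum defining `H p` is attained at `q = (L')⁻¹ p`. Fenchel–Young then gives the subgradient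
inequality `H p' - H p ≥ (p' - p) (L')⁻¹ p`, which traps every difference quotient of `H` between
values of the continuous increasing function `(L')⁻¹`; hence `H' = (L')⁻¹`, which vanishes at
`L'(0)`. For `H⁻`, when `p > L'(0)` the constraint `q ≤ 0` gives `p q ≤ L'(0) q`, so the constrained
supremum is `H (min p (L'(0)))`.
-/

open Filter Set Topology

theorem surjective_of_le_deriv {f : ℝ → ℝ} {γ : ℝ} (hf : Differentiable ℝ f) (hγ : 0 < γ)
    (h : ∀ x, γ ≤ deriv f x) : Function.Surjective f := by
  have grow : ∀ ⦃x y⦄, x ≤ y → γ * (y - x) ≤ f y - f x := mul_sub_le_image_sub_of_le_deriv hf h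
  refine hf.continuous.surjective ?_ ?_
  · refine tendsto_atTop_mono' atTop ?_ (tendsto_atTop_add_const_left _ (f 0)
      (tendsto_id.const_mul_atTop hγ))
    filter_upwards [eventually_ge_atTop 0] with x hx
    have := grow hx
    simp only [id_eq]
    linarith
  · refine tendsto_atBot_mono' atBot ?_ (tendsto_atBot_add_const_left _ (f 0)
      (tendsto_id.const_mul_atBot hγ))
    filter_upwards [eventually_le_atBot 0] with x hx
    have := grow hx
    simp only [id_eq]
    linarith

theorem ConvexOn.add_mul_sub_le_of_hasDerivAt {f : ℝ → ℝ} {f' x : ℝ} (hf : ConvexOn ℝ univ f)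
    (hx : HasDerivAt f f' x) (y : ℝ) : f x + f' * (y - x) ≤ f y := by
  rcases lt_trichotomy x y with hxy | rfl | hyx
  · have := hf.le_slope_of_hasDerivAt (mem_univ x) (mem_univ y) hxy hx
    rw [slope_def_field, le_div_iff₀ (sub_pos.2 hxy)] at this
    linarith
  · simp
  · have := hf.slope_le_of_hasDerivAt (mem_univ y) (mem_univ x) hyx hx
    rw [slope_def_field, div_le_iff₀ (sub_pos.2 hyx)] at this
    linarith

theorem hasDerivAt_of_sub_mul_le_sub {f g : ℝ → ℝ} {x : ℝ}
    (hsub : ∀ y z, (z - y) * g y ≤ f z - f y) (hg : ContinuousAt g x) :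
    HasDerivAt f (g x) x := by
  have hslope : ∀ y ≠ x, slope f x y ∈ uIcc (g x) (g y) := by
    intro y hyx
    have h₁ := hsub x y
    have h₂ := hsub y x
    rw [slope_def_field]
    rcases hyx.lt_or_gt with hyx | hxy
    · refine mem_uIcc.2 (Or.inr ⟨?_, ?_⟩)
      · rw [le_div_iff_of_neg (sub_neg.2 hyx)]; linarith
      · rw [div_le_iff_of_neg (sub_neg.2 hyx)]; linarith
    · refine mem_uIcc.2 (Or.inl ⟨?_, ?_⟩)
      · rw [le_div_iff₀ (sub_pos.2 hxy)]; linarith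
      · rw [div_le_iff₀ (sub_pos.2 hxy)]; linarith
  have hmin : Tendsto (fun y => min (g x) (g y)) (𝓝[≠] x) (𝓝 (g x)) := by
    simpa only [min_self] using
      ((tendsto_const_nhds (x := g x)).min hg.tendsto).mono_left nhdsWithin_le_nhds
  have hmax : Tendsto (fun y => max (g x) (g y)) (𝓝[≠] x) (𝓝 (g x)) := by
    simpa only [max_self] using
      ((tendsto_const_nhds (x := g x)).max hg.tendsto).mono_left nhdsWithin_le_nhds
  refine hasDerivAt_iff_tendsto_slope.2 (tendsto_of_tendsto_of_tendsto_of_le_of_le' hmin hmax ?_ ?_)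
  · filter_upwards [self_mem_nhdsWithin] with y hy using (hslope y hy).1
  · filter_upwards [self_mem_nhdsWithin] with y hy using (hslope y hy).2

theorem antitoneOn_of_sub_mul_le_sub {f g : ℝ → ℝ} {s : Set ℝ}
    (hsub : ∀ y z, (z - y) * g y ≤ f z - f y) (hg : ∀ x ∈ s, g x ≤ 0) : AntitoneOn f s :=
  fun a _ b hb hab => by nlinarith [hsub b a, hg b hb]

theorem monotoneOn_of_sub_mul_le_sub {f g : ℝ → ℝ} {s : Set ℝ}
    (hsub : ∀ y z, (z - y) * g y ≤ f z - f y) (hg : ∀ x ∈ s, 0 ≤ g x) : MonotoneOn f s :=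
  fun a ha b _ hab => by nlinarith [hsub a b, hg a ha]

theorem ciSup_eq_of_forall_le {ι α : Type*} [ConditionallyCompleteLattice α] {f : ι → α}
    {i₀ : ι} (h : ∀ i, f i ≤ f i₀) : ⨆ i, f i = f i₀ :=
  have : Nonempty ι := ⟨i₀⟩
  (IsGreatest.isLUB ⟨mem_range_self i₀, forall_mem_range.2 h⟩).ciSup_eq

noncomputable def legendre (L : ℝ → ℝ) (p : ℝ) : ℝ := ⨆ q, p * q - L q

section Legendre

variable {L : ℝ → ℝ} {p x : ℝ}

theorem mul_sub_le_of_hasDerivAt (hL : ConvexOn ℝ univ L) (hx : HasDerivAt L p x) (q : ℝ) :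
    p * q - L q ≤ p * x - L x := by
  linarith [hL.add_mul_sub_le_of_hasDerivAt hx q]

theorem legendre_eq_of_hasDerivAt (hL : ConvexOn ℝ univ L) (hx : HasDerivAt L p x) :
    legendre L p = p * x - L x :=
  ciSup_eq_of_forall_le (mul_sub_le_of_hasDerivAt hL hx)

theorem mul_sub_le_legendre (hL : ConvexOn ℝ univ L) (hx : HasDerivAt L p x) (q : ℝ) :
    p * q - L q ≤ legendre L p :=
  (legendre_eq_of_hasDerivAt hL hx).symm ▸ mul_sub_le_of_hasDerivAt hL hx q

theorem sub_mul_le_legendre_sub {p' x' : ℝ} (hL : ConvexOn ℝ univ L) (hx : HasDerivAt L p x)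
    (hx' : HasDerivAt L p' x') : (p' - p) * x ≤ legendre L p' - legendre L p := by
  rw [legendre_eq_of_hasDerivAt hL hx]
  linarith [mul_sub_le_legendre hL hx' x]

theorem tendsto_legendre_atTop (hL : ConvexOn ℝ univ L) (hsurj : ∀ p, ∃ x, HasDerivAt L p x) :
    Tendsto (legendre L) atTop atTop := by
  refine tendsto_atTop_mono (fun p => ?_) (tendsto_atTop_add_const_right _ (-L 1) tendsto_id)
  obtain ⟨x, hx⟩ := hsurj p
  simpa [sub_eq_add_neg] using mul_sub_le_legendre hL hx 1

theorem tendsto_legendre_atBot (hL : ConvexOn ℝ univ L) (hsurj : ∀ p, ∃ x, HasDerivAt L p x) :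
    Tendsto (legendre L) atBot atTop := by
  refine tendsto_atTop_mono (fun p => ?_)
    (tendsto_atTop_add_const_right _ (-L (-1)) tendsto_neg_atBot_atTop)
  obtain ⟨x, hx⟩ := hsurj p
  simpa [sub_eq_add_neg] using mul_sub_le_legendre hL hx (-1)

theorem iSup_nonpos_mul_sub_eq_legendre_min (hLd : Differentiable ℝ L)
    (hmono : StrictMono (deriv L)) (hx : deriv L x = min p (deriv L 0)) :
    ⨆ q : {q : ℝ // q ≤ 0}, p * q.1 - L q.1 = legendre L (min p (deriv L 0)) := by
  have hL : ConvexOn ℝ univ L := hmono.monotone.convexOn_univ_of_deriv hLd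
  have hxL : HasDerivAt L (min p (deriv L 0)) x := (hLd x).hasDerivAt.congr_deriv hx
  have hx0 : x ≤ 0 := hmono.le_iff_le.1 (hx ▸ min_le_right _ _)
  -- either the minimum is `p`, or it is `L'(0)` and then the maximizer is `0`
  have hpx : p * x = min p (deriv L 0) * x := by
    rcases le_total p (deriv L 0) with h | h
    · rw [min_eq_left h]
    · rw [min_eq_right h] at hx
      rw [hmono.injective hx, mul_zero, mul_zero]
  rw [legendre_eq_of_hasDerivAt hL hxL, ← hpx]
  refine ciSup_eq_of_forall_le (f := fun q : {q : ℝ // q ≤ 0} => p * q.1 - L q.1)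
    (i₀ := ⟨x, hx0⟩) fun ⟨q, hq⟩ => ?_
  have hpq : p * q ≤ min p (deriv L 0) * q := mul_le_mul_of_nonpos_right (min_le_left _ _) hq
  linarith [mul_sub_le_of_hasDerivAt hL hxL q]

end Legendre

/-- Assumption (A1) implies assumption (A1'): if `L` is C² with `L'' ≥ γ > 0`,
`H = L*` and `H⁻(p) = sup_{q ≤ 0}(pq − L q)`, then `H` is C¹, convex, coercive,
non-increasing on `(−∞, L'(0)]`, non-decreasing on `[L'(0), ∞)`, and
`H⁻(p) = H (min p (L'(0)))`. -/
theorem A1_implies_A1prime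
    (L H Hm : ℝ → ℝ) (γ : ℝ) (hγ : 0 < γ) (hL : ContDiff ℝ 2 L)
    (hL'' : ∀ x : ℝ, γ ≤ iteratedDeriv 2 L x)
    (hH : ∀ p, H p = ⨆ q : ℝ, (p * q - L q))
    (hHm : ∀ p, Hm p = ⨆ q : {q : ℝ // q ≤ 0}, (p * q.1 - L q.1)) :
    ContDiff ℝ 1 H ∧ ConvexOn ℝ Set.univ H ∧
    Tendsto H atTop atTop ∧ Tendsto H atBot atTop ∧
    AntitoneOn H (Set.Iic (deriv L 0)) ∧ MonotoneOn H (Set.Ici (deriv L 0)) ∧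
    (∀ p : ℝ, Hm p = H (min p (deriv L 0))) := by
  obtain rfl : H = legendre L := funext hH
  have hLd : Differentiable ℝ L := hL.differentiable (by norm_num)
  have hL'd : Differentiable ℝ (deriv L) :=
    (contDiff_succ_iff_deriv.1 (hL : ContDiff ℝ (1 + 1) L)).2.2.differentiable one_ne_zero
  have hL''γ : ∀ x, γ ≤ deriv (deriv L) x := by
    simpa only [iteratedDeriv_succ, iteratedDeriv_zero] using hL''
  have hmono : StrictMono (deriv L) := strictMono_of_deriv_pos fun x => hγ.trans_le (hL''γ x)
  have hconv : ConvexOn ℝ univ L := hmono.monotone.convexOn_univ_of_deriv hLd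
  set e := hmono.orderIsoOfSurjective _ (surjective_of_le_deriv hL'd hγ hL''γ)
  have he : ∀ p, deriv L (e.symm p) = p := e.apply_symm_apply
  have hHe : ∀ p, HasDerivAt L p (e.symm p) := fun p => (hLd _).hasDerivAt.congr_deriv (he p)
  have hsub : ∀ p p', (p' - p) * e.symm p ≤ legendre L p' - legendre L p :=
    fun p p' => sub_mul_le_legendre_sub hconv (hHe p) (hHe p')
  have hderiv : ∀ p, HasDerivAt (legendre L) (e.symm p) p :=
    fun p => hasDerivAt_of_sub_mul_le_sub hsub e.symm.continuous.continuousAt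
  have hderiv_eq : deriv (legendre L) = e.symm := funext fun p => (hderiv p).deriv
  have hdiff : Differentiable ℝ (legendre L) := fun p => (hderiv p).differentiableAt
  have he0 : e.symm (deriv L 0) = 0 := hmono.orderIsoOfSurjective_symm_apply_self _ _ 0
  refine ⟨contDiff_one_iff_deriv.2 ⟨hdiff, hderiv_eq ▸ e.symm.continuous⟩,
    (hderiv_eq ▸ e.symm.monotone).convexOn_univ_of_deriv hdiff,
    tendsto_legendre_atTop hconv fun p => ⟨_, hHe p⟩,
    tendsto_legendre_atBot hconv fun p => ⟨_, hHe p⟩,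
    antitoneOn_of_sub_mul_le_sub hsub fun p hp => he0 ▸ e.symm.monotone hp,
    monotoneOn_of_sub_mul_le_sub hsub fun p hp => he0 ▸ e.symm.monotone hp,
    fun p => (hHm p).trans (iSup_nonpos_mul_sub_eq_legendre_min hLd hmono (he _))⟩
end

section
/- Define, for convex C² Lagrangians L_j, L_i with L_j'', L_i'' ≥ γ > 0, the function ℰ₁(τ, y) = τ·L_j(−y/τ) − τ·c for τ ∈ (0,1] and y > 0 (with ℰ₁(τ,0)=0 for τ ∈ [0,1] and ℰ₁(0,y) = +∞ for y > 0), where c is a constant. Then ℰ₁ is lower semi-continuous on [0,1] × [0,∞). Moreover ℰ₁(τ,y) ≥ (γ/4)·y²/τ − C₀τ for τ > 0, where C₀ = max(0, c − min_j L_j(0) + γ₀²/γ) with γ₀ = |L_j'(0)|. -/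
open Set Filter Topology Function

/-!
Since `L'' ≥ γ`, `L` lies above its tangent parabola `L 0 + L' 0 ξ + γ/2 ξ²`; spending half of the
quadratic term to complete the square gives `L ξ ≥ L 0 - L' 0 ² / γ + γ/4 ξ²`, and putting
`ξ = -y/τ` and multiplying by `τ` gives the lower bound. That bound forces `ℰ₁ → +∞` at the points
`(0, y₀)` with `y₀ > 0`, and `ℰ₁ ≥ -C₀ τ` near `(0, 0)`. Where `τ > 0` the action is continuous
off `y = 0`, and near `(τ, 0)` it dominates the continuous function `min (τ L(-y/τ) - τ c) 0`,
which vanishes at `(τ, 0)` because `c ≤ L 0`.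
-/

theorem add_deriv_mul_add_sq_le_of_le_iteratedDeriv_two {f : ℝ → ℝ} {γ : ℝ}
    (hf : ContDiff ℝ 2 f) (hγ : ∀ ξ, γ ≤ iteratedDeriv 2 f ξ) (x ξ : ℝ) :
    f x + deriv f x * (ξ - x) + γ / 2 * (ξ - x) ^ 2 ≤ f ξ := by
  have hf' : ∀ t, HasDerivAt f (deriv f t) t :=
    fun t => (hf.differentiable (by norm_num) t).hasDerivAt
  have hf'' : ∀ t, HasDerivAt (deriv f) (iteratedDeriv 2 f t) t := fun t => by
    simpa [iteratedDeriv_succ, iteratedDeriv_one] using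
      (hf.differentiable_iteratedDeriv 1 (by norm_num) t).hasDerivAt
  set χ := fun t => deriv f t - deriv f x - γ * (t - x)
  have hχ' : ∀ t, HasDerivAt χ (iteratedDeriv 2 f t - γ) t := fun t =>
    (((hf'' t).sub_const _).sub (((hasDerivAt_id' t).sub_const x).const_mul γ)).congr_deriv
      (by ring)
  have hχ : Monotone χ := monotone_of_deriv_nonneg (fun t => (hχ' t).differentiableAt)
    (fun t => by simpa [(hχ' t).deriv] using hγ t)
  set ψ := fun t => f t - deriv f x * (t - x) - γ / 2 * (t - x) ^ 2
  have hψ : ∀ t, HasDerivAt ψ (χ t) t := fun t =>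
    (((hf' t).sub (((hasDerivAt_id' t).sub_const x).const_mul (deriv f x))).sub
      ((((hasDerivAt_id' t).sub_const x).pow 2).const_mul (γ / 2))).congr_deriv
      (by simp only [χ, Nat.cast_ofNat, Nat.add_one_sub_one, pow_one]; ring)
  -- `ψ' = χ` is monotone and vanishes at `x`, so `x` minimizes `ψ`
  have hmin : ψ x ≤ ψ ξ := isMinOn_univ_of_deriv (hψ x).continuousAt
    (fun t _ => (hψ t).differentiableAt.differentiableWithinAt)
    (fun t _ => (hψ t).differentiableAt.differentiableWithinAt)
    (fun t ht => by simpa [(hψ t).deriv, χ] using hχ (le_of_lt ht))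
    (fun t ht => by simpa [(hψ t).deriv, χ] using hχ (le_of_lt ht)) (mem_univ ξ)
  simp only [ψ, sub_self] at hmin
  linarith

theorem LowerSemicontinuousWithinAt.of_eventually_le {α β : Type*} [TopologicalSpace α]
    [Preorder β] {f g : α → β} {s : Set α} {x : α} (hg : LowerSemicontinuousWithinAt g s x)
    (hgf : g ≤ᶠ[𝓝[s] x] f) (hx : f x ≤ g x) : LowerSemicontinuousWithinAt f s x :=
  fun b hb => (hg b (hb.trans_le hx)).mp (hgf.mono fun _ hle hlt => hlt.trans_le hle)

theorem quarter_mul_sq_div_sub_le_perspective {L : ℝ → ℝ} {a γ c : ℝ} (hγ : 0 < γ)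
    (hL : ∀ ξ, L 0 + a * ξ + γ / 2 * ξ ^ 2 ≤ L ξ) {τ : ℝ} (hτ : 0 < τ) (y : ℝ) :
    γ / 4 * y ^ 2 / τ - (c - L 0 + a ^ 2 / γ) * τ ≤ τ * L (-y / τ) - τ * c := by
  set ξ := -y / τ
  have hy : y = -(τ * ξ) := by simp only [ξ]; field_simp
  have hsq : γ / 4 * (ξ + 2 * a / γ) ^ 2 = γ / 4 * ξ ^ 2 + a * ξ + a ^ 2 / γ := by
    field_simp; ring
  have hξ : γ / 4 * ξ ^ 2 - (c - L 0 + a ^ 2 / γ) ≤ L ξ - c := by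
    nlinarith [hL ξ, sq_nonneg (ξ + 2 * a / γ)]
  calc γ / 4 * y ^ 2 / τ - (c - L 0 + a ^ 2 / γ) * τ
      = τ * (γ / 4 * ξ ^ 2 - (c - L 0 + a ^ 2 / γ)) := by rw [hy]; field_simp
    _ ≤ τ * (L ξ - c) := mul_le_mul_of_nonneg_left hξ hτ.le
    _ = τ * L ξ - τ * c := by ring

theorem continuousAt_perspective_sub {L : ℝ → ℝ} (hL : Continuous L) (c : ℝ) {p : ℝ × ℝ}
    (hp : p.1 ≠ 0) : ContinuousAt (fun q : ℝ × ℝ => q.1 * L (-q.2 / q.1) - q.1 * c) p := by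
  fun_prop (disch := exact hp)

section PartialAction

variable {L : ℝ → ℝ} {γ c C : ℝ} {E : ℝ → ℝ → EReal}

theorem coe_le_of_quadratic_minorant {a : ℝ} (hγ : 0 < γ)
    (hL : ∀ ξ, L 0 + a * ξ + γ / 2 * ξ ^ 2 ≤ L ξ) (hC₀ : 0 ≤ C) (hC : c - L 0 + a ^ 2 / γ ≤ C)
    (hzero : ∀ τ, E τ 0 = 0)
    (hpos : ∀ τ y, 0 < τ → 0 < y → E τ y = ((τ * L (-y / τ) - τ * c : ℝ) : EReal))
    {τ y : ℝ} (hτ : 0 < τ) (hy : 0 ≤ y) :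
    ((γ / 4 * y ^ 2 / τ - C * τ : ℝ) : EReal) ≤ E τ y := by
  rcases hy.eq_or_lt with rfl | hy
  · rw [hzero]
    exact_mod_cast (by simpa using mul_nonneg hC₀ hτ.le)
  · rw [hpos τ y hτ hy, EReal.coe_le_coe_iff]
    have := quarter_mul_sq_div_sub_le_perspective (c := c) hγ hL hτ y
    nlinarith

theorem continuousAt_uncurry_of_pos (hL : Continuous L)
    (hpos : ∀ τ y, 0 < τ → 0 < y → E τ y = ((τ * L (-y / τ) - τ * c : ℝ) : EReal))
    {q : ℝ × ℝ} (hτ : 0 < q.1) (hy : 0 < q.2) : ContinuousAt (uncurry E) q := by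
  refine (continuous_coe_real_ereal.continuousAt.comp
    (continuousAt_perspective_sub hL c hτ.ne')).congr ?_
  filter_upwards [(isOpen_lt continuous_const continuous_fst).inter
    (isOpen_lt continuous_const continuous_snd) |>.mem_nhds ⟨hτ, hy⟩] with p ⟨hp₁, hp₂⟩
  exact (hpos _ _ hp₁ hp₂).symm

theorem lowerSemicontinuousWithinAt_uncurry_of_pos_of_zero (hL : Continuous L) (hc : c ≤ L 0)
    (hzero : ∀ τ, E τ 0 = 0)
    (hpos : ∀ τ y, 0 < τ → 0 < y → E τ y = ((τ * L (-y / τ) - τ * c : ℝ) : EReal))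
    {τ : ℝ} (hτ : 0 < τ) : LowerSemicontinuousWithinAt (uncurry E) (univ ×ˢ Ici 0) (τ, 0) := by
  set g : ℝ × ℝ → ℝ := fun p => min (p.1 * L (-p.2 / p.1) - p.1 * c) 0
  have hg : ContinuousAt g (τ, 0) :=
    (continuousAt_perspective_sub hL c hτ.ne').min continuousAt_const
  have hgτ : g (τ, 0) = 0 := min_eq_right (by simpa using mul_le_mul_of_nonneg_left hc hτ.le)
  refine (continuous_coe_real_ereal.continuousAt.comp hg).continuousWithinAt
    |>.lowerSemicontinuousWithinAt.of_eventually_le ?_ (by simp [uncurry, hzero, hgτ])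
  filter_upwards [self_mem_nhdsWithin, nhdsWithin_le_nhds
    ((isOpen_lt continuous_const continuous_fst).mem_nhds hτ)] with p hp hp₁
  show ((g p : ℝ) : EReal) ≤ E p.1 p.2
  rcases (mem_Ici.1 hp.2).eq_or_lt with hp₂ | hp₂
  · rw [← hp₂, hzero]
    exact EReal.coe_nonpos.2 (min_le_right _ _)
  · rw [hpos _ _ hp₁ hp₂]
    exact EReal.coe_le_coe_iff.2 (min_le_left _ _)

theorem lowerSemicontinuousWithinAt_uncurry_zero_zero
    (hzero : ∀ τ, E τ 0 = 0) (htop : ∀ y, 0 < y → E 0 y = ⊤)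
    (hbound : ∀ τ y, 0 < τ → 0 ≤ y → ((-C * τ : ℝ) : EReal) ≤ E τ y) :
    LowerSemicontinuousWithinAt (uncurry E) (Ici 0 ×ˢ Ici 0) (0, 0) := by
  have hg : Continuous fun p : ℝ × ℝ => ((-C * p.1 : ℝ) : EReal) :=
    continuous_coe_real_ereal.comp (by fun_prop)
  refine hg.continuousWithinAt.lowerSemicontinuousWithinAt.of_eventually_le ?_
    (by simp [uncurry, hzero])
  filter_upwards [self_mem_nhdsWithin] with ⟨τ, y⟩ ⟨hτ, hy⟩
  rcases (mem_Ici.1 hτ).eq_or_lt with rfl | hτ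
  · rcases (mem_Ici.1 hy).eq_or_lt with rfl | hy
    · simp [uncurry, hzero]
    · simp [uncurry, htop y hy]
  · exact hbound τ y hτ hy

theorem continuousWithinAt_uncurry_zero_of_pos (hγ : 0 < γ) (hC : 0 ≤ C)
    (htop : ∀ y, 0 < y → E 0 y = ⊤)
    (hbound : ∀ τ y, 0 < τ → 0 ≤ y → ((γ / 4 * y ^ 2 / τ - C * τ : ℝ) : EReal) ≤ E τ y)
    {y₀ : ℝ} (hy₀ : 0 < y₀) : ContinuousWithinAt (uncurry E) (Ici 0 ×ˢ Ici 0) (0, y₀) := by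
  rw [ContinuousWithinAt, show uncurry E (0, y₀) = ⊤ from htop y₀ hy₀,
    EReal.tendsto_nhds_top_iff_real]
  intro M
  have hy₀y : ∀ᶠ p : ℝ × ℝ in 𝓝 (0, y₀), y₀ / 2 < p.2 :=
    continuousAt_const.eventually_lt continuousAt_snd (by linarith)
  have hτ₁ : ∀ᶠ p : ℝ × ℝ in 𝓝 (0, y₀), p.1 < 1 :=
    continuousAt_fst.eventually_lt continuousAt_const one_pos
  have hτM : ∀ᶠ p : ℝ × ℝ in 𝓝 (0, y₀), p.1 * (M + C) < γ * y₀ ^ 2 / 16 :=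
    (continuousAt_fst.mul continuousAt_const).eventually_lt continuousAt_const
      (by simpa using (by positivity : 0 < γ * y₀ ^ 2 / 16))
  filter_upwards [self_mem_nhdsWithin, nhdsWithin_le_nhds hy₀y, nhdsWithin_le_nhds hτ₁,
    nhdsWithin_le_nhds hτM] with ⟨τ, y⟩ ⟨hτ, hy⟩ hy₀y hτ₁ hτM
  rcases (mem_Ici.1 hτ).eq_or_lt with rfl | hτ
  · simp [uncurry, htop y (by linarith)]
  · refine lt_of_lt_of_le ?_ (hbound τ y hτ hy)
    rw [EReal.coe_lt_coe_iff, lt_sub_iff_add_lt, lt_div_iff₀ hτ]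
    have hCτ : C * τ * τ ≤ C * τ := by nlinarith [mul_nonneg hC hτ.le]
    have hy' : y₀ ^ 2 < 4 * y ^ 2 := by nlinarith
    nlinarith

theorem lowerSemicontinuousOn_uncurry (hL : Continuous L) (hc : c ≤ L 0) (hγ : 0 < γ)
    (hC : 0 ≤ C) (hzero : ∀ τ, E τ 0 = 0)
    (hpos : ∀ τ y, 0 < τ → 0 < y → E τ y = ((τ * L (-y / τ) - τ * c : ℝ) : EReal))
    (htop : ∀ y, 0 < y → E 0 y = ⊤)
    (hbound : ∀ τ y, 0 < τ → 0 ≤ y → ((γ / 4 * y ^ 2 / τ - C * τ : ℝ) : EReal) ≤ E τ y) :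
    LowerSemicontinuousOn (uncurry E) (Ici 0 ×ˢ Ici 0) := by
  rintro ⟨τ, y⟩ ⟨hτ, hy⟩
  rcases (mem_Ici.1 hτ).eq_or_lt with rfl | hτ <;> rcases (mem_Ici.1 hy).eq_or_lt with rfl | hy
  · refine lowerSemicontinuousWithinAt_uncurry_zero_zero (C := C) hzero htop fun τ y hτ hy => ?_
    refine le_trans (EReal.coe_le_coe_iff.2 ?_) (hbound τ y hτ hy)
    have : 0 ≤ γ / 4 * y ^ 2 / τ := by positivity
    linarith
  · exact (continuousWithinAt_uncurry_zero_of_pos hγ hC htop hbound hy).lowerSemicontinuousWithinAt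
  · exact (lowerSemicontinuousWithinAt_uncurry_of_pos_of_zero hL hc hzero hpos hτ).mono
      (prod_mono (subset_univ _) le_rfl)
  · exact (continuousAt_uncurry_of_pos hL hpos hτ hy).continuousWithinAt.lowerSemicontinuousWithinAt

end PartialAction

/-- The partial action `ℰ₁(τ,y) = τ Lⱼ(−y/τ) − τ c` (with `ℰ₁(τ,0)=0` and
`ℰ₁(0,y)=+∞` for `y>0`) is lower semi-continuous on `[0,1] × [0,∞)` and satisfies
`ℰ₁(τ,y) ≥ (γ/4) y²/τ − C₀ τ` for `τ ∈ (0,1]`, where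
`C₀ = max(0, c − Lⱼ(0) + γ₀²/γ)`, `γ₀ = |Lⱼ'(0)|`. -/
theorem E1_lsc_and_lower_bound
    (Lj : ℝ → ℝ) (γ c : ℝ) (hγ : 0 < γ) (hLj : ContDiff ℝ 2 Lj)
    (hLj'' : ∀ ξ : ℝ, γ ≤ iteratedDeriv 2 Lj ξ)
    (hc : c ≤ Lj 0)
    (E1 : ℝ → ℝ → EReal)
    (hE1zero : ∀ τ : ℝ, E1 τ 0 = 0)
    (hE1pos : ∀ τ y : ℝ, 0 < τ → 0 < y →
      E1 τ y = ((τ * Lj (-y / τ) - τ * c : ℝ) : EReal))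
    (hE1top : ∀ y : ℝ, 0 < y → E1 0 y = ⊤)
    (C₀ : ℝ) (hC₀ : C₀ = max 0 (c - Lj 0 + |deriv Lj 0| ^ 2 / γ)) :
    LowerSemicontinuousOn (fun q : ℝ × ℝ => E1 q.1 q.2) (Icc 0 1 ×ˢ Ici 0) ∧
    ∀ τ ∈ Ioc (0 : ℝ) 1, ∀ y ∈ Ici (0 : ℝ),
      ((γ / 4 * y ^ 2 / τ - C₀ * τ : ℝ) : EReal) ≤ E1 τ y := by
  have hC₀_nonneg : 0 ≤ C₀ := hC₀ ▸ le_max_left _ _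
  have hC₀_ge : c - Lj 0 + deriv Lj 0 ^ 2 / γ ≤ C₀ := sq_abs (deriv Lj 0) ▸ hC₀ ▸ le_max_right _ _
  have hLj_ge : ∀ ξ, Lj 0 + deriv Lj 0 * ξ + γ / 2 * ξ ^ 2 ≤ Lj ξ := fun ξ => by
    simpa using add_deriv_mul_add_sq_le_of_le_iteratedDeriv_two hLj hLj'' 0 ξ
  have hbound : ∀ τ y, 0 < τ → 0 ≤ y →
      ((γ / 4 * y ^ 2 / τ - C₀ * τ : ℝ) : EReal) ≤ E1 τ y := fun _ _ hτ hy =>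
    coe_le_of_quadratic_minorant hγ hLj_ge hC₀_nonneg hC₀_ge hE1zero hE1pos hτ hy
  exact ⟨(lowerSemicontinuousOn_uncurry hLj.continuous hc hγ hC₀_nonneg hE1zero hE1pos hE1top
    hbound).mono (prod_mono Icc_subset_Ici_self le_rfl), fun τ hτ y hy => hbound τ y hτ.1 hy⟩
end

section
/- Let L_j, L_i : ℝ → ℝ be C² with L'' ≥ γ > 0, let H_i = L_i*, H_j = L_j* be the Legendre transforms, and suppose ξ_y ≤ 0 ≤ ξ_x satisfy K_j(ξ_y) = K_i(ξ_x), where K_l(ξ) = L_l(ξ) − ξ L_l'(ξ) − c. Define, for τ ∈ (0,1) with ξ_y = −y/τ, ξ_x = x/(1−τ), the value D = τ L_j(ξ_y) + (1−τ) L_i(ξ_x), and set p_x = L_i'(ξ_x), p_y = −L_j'(ξ_y). Then D − x·p_x + y·p_y + H_i(p_x) = 0 and D − x·p_x + y·p_y + H_j(−p_y) = 0. -/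
lemma legendre_eq (L : ℝ → ℝ) (γ : ℝ) (hγ : 0 < γ) (hL : ContDiff ℝ 2 L)
    (h2 : ∀ ξ : ℝ, γ ≤ iteratedDeriv 2 L ξ) (ξ : ℝ) :
    (⨆ q : ℝ, (deriv L ξ * q - L q)) = ξ * deriv L ξ - L ξ := by
  have hdiff : Differentiable ℝ L := hL.differentiable (by norm_num)
  have hd2 : Differentiable ℝ (deriv L) := (hL.iterate_deriv' 1 1).differentiable (by norm_num)
  have hconv : ConvexOn ℝ Set.univ L := by
    apply convexOn_univ_of_deriv2_nonneg hdiff hd2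
    intro x
    have := h2 x
    rw [iteratedDeriv_succ, iteratedDeriv_one] at this
    show (0:ℝ) ≤ deriv (deriv L) x
    linarith
  have hub : ∀ q : ℝ, deriv L ξ * q - L q ≤ ξ * deriv L ξ - L ξ := by
    intro q
    rcases lt_trichotomy q ξ with h | h | h
    · have := hconv.slope_le_deriv (Set.mem_univ q) (Set.mem_univ ξ) h (hdiff ξ)
      rw [slope_def_field, div_le_iff₀ (by linarith)] at this
      nlinarith
    · subst h; ring_nf; exact le_refl _
    · have := hconv.deriv_le_slope (Set.mem_univ ξ) (Set.mem_univ q) h (hdiff ξ)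
      rw [slope_def_field, le_div_iff₀ (by linarith)] at this
      nlinarith
  refine le_antisymm (ciSup_le hub) ?_
  have := le_ciSup ⟨ξ * deriv L ξ - L ξ, fun v ⟨q, hq⟩ => hq ▸ hub q⟩ ξ
  calc ξ * deriv L ξ - L ξ = deriv L ξ * ξ - L ξ := by ring
    _ ≤ _ := this


/-- The implicit minimal action solves the stationary Hamilton–Jacobi equations
in both variables: with `ξ_y ≤ 0 ≤ ξ_x` satisfying `Kⱼ(ξ_y) = Kᵢ(ξ_x)`,
`y = −τ ξ_y`, `x = (1−τ) ξ_x`, `D = τ Lⱼ(ξ_y) + (1−τ) Lᵢ(ξ_x)`,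
`p_x = Lᵢ'(ξ_x)`, `p_y = −Lⱼ'(ξ_y)`, one has
`D − x p_x − y p_y + Hᵢ(p_x) = 0` and `D − x p_x − y p_y + Hⱼ(−p_y) = 0`. -/
theorem implicit_action_solves_HJ
    (Lj Li Hj Hi Kj Ki : ℝ → ℝ) (γ c : ℝ) (hγ : 0 < γ)
    (hLj : ContDiff ℝ 2 Lj) (hLi : ContDiff ℝ 2 Li)
    (hLj'' : ∀ ξ : ℝ, γ ≤ iteratedDeriv 2 Lj ξ)
    (hLi'' : ∀ ξ : ℝ, γ ≤ iteratedDeriv 2 Li ξ)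
    (hHj : ∀ p, Hj p = ⨆ q : ℝ, (p * q - Lj q))
    (hHi : ∀ p, Hi p = ⨆ q : ℝ, (p * q - Li q))
    (hKj : ∀ ξ, Kj ξ = Lj ξ - ξ * deriv Lj ξ - c)
    (hKi : ∀ ξ, Ki ξ = Li ξ - ξ * deriv Li ξ - c)
    (ξy ξx τ y x D px py : ℝ)
    (hξy : ξy ≤ 0) (hξx : 0 ≤ ξx) (hτ : τ ∈ Set.Ioo (0 : ℝ) 1)
    (hbal : Kj ξy = Ki ξx)
    (hy : y = -τ * ξy) (hx : x = (1 - τ) * ξx)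
    (hD : D = τ * Lj ξy + (1 - τ) * Li ξx)
    (hpx : px = deriv Li ξx) (hpy : py = -deriv Lj ξy) :
    D - x * px - y * py + Hi px = 0 ∧ D - x * px - y * py + Hj (-py) = 0 := by
  obtain ⟨hτ0, hτ1⟩ := hτ
  have hHi' : Hi px = ξx * deriv Li ξx - Li ξx := by
    rw [hpx, hHi, legendre_eq Li γ hγ hLi hLi'' ξx]
  have hHj' : Hj (-py) = ξy * deriv Lj ξy - Lj ξy := by
    rw [hpy, neg_neg, hHj, legendre_eq Lj γ hγ hLj hLj'' ξy]
  have hb : Lj ξy - ξy * deriv Lj ξy - c = Li ξx - ξx * deriv Li ξx - c := by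
    rw [← hKj, ← hKi]; exact hbal
  constructor
  · rw [hHi', hD, hx, hy, hpx, hpy]; nlinarith [hb]
  · rw [hHj', hD, hx, hy, hpx, hpy]; nlinarith [hb]
end
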